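/- arXiv:1811.05652 — 4 statements merged into one kernel-verified Lean document; each statement's English description precedes it below -/
import Mathlib

section
/- Let f be a monotone submodular normalized function on subsets of a finite ground set V, and let k ≥ 1. Suppose an algorithm value function A assigns to each finite sequence (stream) S of elements a value with the properties: (i) c-approximation: A(S) ≥ c · max{f(T) : T ⊆ elems(S), |T| ≤ k} for a constant 0 < c < 1; (ii) suffix-monotonicity: A(S ‖ S') ≥ A(S) for every continuation S'. If A(S₂) ≥ (1−ε)·A(S₁ ‖ S₂) for streams S₁, S₂, then for every stream S₃, A(S₂ ‖ S₃) ≥ (c/2)(1−ε)·OPT, where OPT = max{f(T) : T ⊆ elems(S₁ ‖ S₂ ‖ S₃), |T| ≤ k}. -/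
open Finset

/-- Optimal value of cardinality-constrained maximization of `f` over subsets of `E`. -/
noncomputable def OPT {V : Type*} [DecidableEq V] (f : Finset V → ℝ) (k : ℕ)
    (E : Finset V) : ℝ :=
  (E.powerset.filter (fun T => T.card ≤ k)).sup' ⟨∅, by simp⟩ f

/-- General substreams lemma, conclusion (1). -/
theorem substreams_one {V : Type*} [DecidableEq V]
    (f : Finset V → ℝ) (k : ℕ) (hk : 1 ≤ k)
    (hmono : ∀ S T : Finset V, S ⊆ T → f S ≤ f T)
    (hsub : ∀ A B : Finset V, f (A ∪ B) + f (A ∩ B) ≤ f A + f B)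
    (hnorm : f ∅ = 0)
    (A : List V → ℝ) (c : ℝ) (hc0 : 0 < c) (hc1 : c < 1)
    (happrox : ∀ S : List V, c * OPT f k S.toFinset ≤ A S)
    (hsuffix : ∀ S S' : List V, A S ≤ A (S ++ S'))
    (ε : ℝ) (hε0 : 0 ≤ ε) (hε1 : ε < 1)
    (S₁ S₂ : List V)
    (h : (1 - ε) * A (S₁ ++ S₂) ≤ A S₂) :
    ∀ S₃ : List V,
      (c / 2) * (1 - ε) * OPT f k (S₁ ++ S₂ ++ S₃).toFinset ≤ A (S₂ ++ S₃) := by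
  intro S₃
  set E12 := (S₁ ++ S₂).toFinset with hE12
  set E23 := (S₂ ++ S₃).toFinset with hE23
  -- membership lemma for OPT
  have hle : ∀ (T E : Finset V), T ⊆ E → T.card ≤ k → f T ≤ OPT f k E := by
    intro T E hTE hTk
    exact Finset.le_sup' f (by simp [Finset.mem_filter, Finset.mem_powerset, hTE, hTk])
  have hOPTnonneg : ∀ E : Finset V, 0 ≤ OPT f k E := by
    intro E
    have := hle ∅ E (Finset.empty_subset E) (by simp)
    simpa [hnorm] using this
  -- key subadditivity of OPT
  have key : OPT f k (S₁ ++ S₂ ++ S₃).toFinset ≤ OPT f k E12 + OPT f k E23 := by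
    obtain ⟨T, hTmem, hTeq⟩ :=
      Finset.exists_mem_eq_sup' (⟨∅, Finset.mem_filter.mpr
        ⟨Finset.mem_powerset.mpr (Finset.empty_subset _), by simp⟩⟩ :
        ((S₁ ++ S₂ ++ S₃).toFinset.powerset.filter (fun T => T.card ≤ k)).Nonempty) f
    simp only [Finset.mem_filter, Finset.mem_powerset] at hTmem
    obtain ⟨hTsub, hTk⟩ := hTmem
    have hsplit : f T ≤ f (T ∩ E12) + f (T \ E12) := by
      have h1 : (T ∩ E12) ∪ (T \ E12) = T := by
        ext x; simp only [Finset.mem_union, Finset.mem_inter, Finset.mem_sdiff]; tauto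
      have h2 : (T ∩ E12) ∩ (T \ E12) = ∅ := by
        ext x
        simp only [Finset.mem_inter, Finset.mem_sdiff, Finset.notMem_empty, iff_false]
        tauto
      have := hsub (T ∩ E12) (T \ E12)
      rw [h1, h2, hnorm] at this
      linarith
    have ha : f (T ∩ E12) ≤ OPT f k E12 :=
      hle _ _ (Finset.inter_subset_right) (le_trans (Finset.card_le_card Finset.inter_subset_left) hTk)
    have hb : f (T \ E12) ≤ OPT f k E23 := by
      refine hle _ _ ?_ (le_trans (Finset.card_le_card (Finset.sdiff_subset)) hTk)
      intro x hx
      rw [Finset.mem_sdiff] at hx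
      have hx1 := hTsub hx.1
      simp only [List.toFinset_append, Finset.mem_union, hE12, hE23] at hx1 hx ⊢
      tauto
    rw [OPT, hTeq]
    linarith
  -- lower bounds on A (S₂ ++ S₃)
  have h1 : c * (1 - ε) * OPT f k E12 ≤ A (S₂ ++ S₃) := by
    have hA1 : c * OPT f k E12 ≤ A (S₁ ++ S₂) := happrox (S₁ ++ S₂)
    have hA2 : A S₂ ≤ A (S₂ ++ S₃) := hsuffix S₂ S₃
    nlinarith [hOPTnonneg E12]
  have h2 : c * (1 - ε) * OPT f k E23 ≤ A (S₂ ++ S₃) := by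
    have hA1 : c * OPT f k E23 ≤ A (S₂ ++ S₃) := happrox (S₂ ++ S₃)
    nlinarith [hOPTnonneg E23, mul_nonneg (mul_nonneg hc0.le hε0) (hOPTnonneg E23)]
  have hcε : (0:ℝ) ≤ c / 2 * (1 - ε) := by nlinarith
  have := mul_le_mul_of_nonneg_left key hcε
  nlinarith
end

section
/- Under the same setup (f monotone submodular normalized, A a suffix-monotone c-approximation streaming value function for cardinality-k maximization): if A(S₁) ≥ (1−ε)·A(S₁ ‖ S₂), then for every stream S₃, A(S₁ ‖ S₃) ≥ (c/2)(1−ε)·OPT, where OPT is the value of an optimal size-≤k solution over elems(S₁ ‖ S₂ ‖ S₃). -/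
open Finset

lemma le_OPT {V : Type*} [DecidableEq V] (f : Finset V → ℝ) (k : ℕ)
    (E T : Finset V) (hT : T ⊆ E) (hcard : T.card ≤ k) : f T ≤ OPT f k E := by
  apply Finset.le_sup'
  simp [Finset.mem_filter, Finset.mem_powerset, hT, hcard]

/-- General substreams lemma, conclusion (2). -/
theorem substreams_two {V : Type*} [DecidableEq V]
    (f : Finset V → ℝ) (k : ℕ) (hk : 1 ≤ k)
    (hmono : ∀ S T : Finset V, S ⊆ T → f S ≤ f T)
    (hsub : ∀ A B : Finset V, f (A ∪ B) + f (A ∩ B) ≤ f A + f B)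
    (hnorm : f ∅ = 0)
    (A : List V → ℝ) (c : ℝ) (hc0 : 0 < c) (hc1 : c < 1)
    (happrox : ∀ S : List V, c * OPT f k S.toFinset ≤ A S)
    (hsuffix : ∀ S S' : List V, A S ≤ A (S ++ S'))
    (ε : ℝ) (hε0 : 0 ≤ ε) (hε1 : ε < 1)
    (S₁ S₂ : List V)
    (h : (1 - ε) * A (S₁ ++ S₂) ≤ A S₁) :
    ∀ S₃ : List V,
      (c / 2) * (1 - ε) * OPT f k (S₁ ++ S₂ ++ S₃).toFinset ≤ A (S₁ ++ S₃) := by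
  intro S₃
  have hεpos : (0:ℝ) < 1 - ε := by linarith
  set a := A (S₁ ++ S₃) with ha
  have key : ∀ T ∈ ((S₁ ++ S₂ ++ S₃).toFinset.powerset.filter (fun T => T.card ≤ k)),
      (c / 2) * (1 - ε) * f T ≤ a := by
    intro T hT
    rw [Finset.mem_filter, Finset.mem_powerset] at hT
    obtain ⟨hTE, hTk⟩ := hT
    set T₁ := T ∩ (S₁ ++ S₂).toFinset with hT₁
    set T₂ := T \ (S₁ ++ S₂).toFinset with hT₂
    have hTsplit : T = T₁ ∪ T₂ := by
      ext x; simp only [hT₁, hT₂, Finset.mem_union, Finset.mem_inter, Finset.mem_sdiff]; tauto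
    have hdisj : T₁ ∩ T₂ = ∅ := by
      ext x; simp only [hT₁, hT₂, Finset.mem_inter, Finset.mem_sdiff,
        Finset.notMem_empty, iff_false]; tauto
    have hfT : f T ≤ f T₁ + f T₂ := by
      have := hsub T₁ T₂
      rw [hdisj, hnorm, ← hTsplit] at this
      linarith
    -- bound f T₁
    have h1 : f T₁ ≤ OPT f k (S₁ ++ S₂).toFinset :=
      le_OPT f k _ _ (Finset.inter_subset_right)
        (le_trans (Finset.card_le_card Finset.inter_subset_left) hTk)
    have h1' : (1 - ε) * (c * f T₁) ≤ a := by
      have h2 : c * OPT f k (S₁ ++ S₂).toFinset ≤ A (S₁ ++ S₂) := happrox _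
      have h3 : A S₁ ≤ a := hsuffix S₁ S₃
      have := mul_le_mul_of_nonneg_left (h1.trans_eq rfl) hc0.le
      nlinarith
    -- bound f T₂
    have hT₂sub : T₂ ⊆ (S₁ ++ S₃).toFinset := by
      intro x hx
      rw [hT₂, Finset.mem_sdiff] at hx
      have hxE := hTE hx.1
      simp only [List.toFinset_append, Finset.mem_union] at hxE hx ⊢
      tauto
    have h4 : f T₂ ≤ OPT f k (S₁ ++ S₃).toFinset :=
      le_OPT f k _ _ hT₂sub
        (le_trans (Finset.card_le_card (Finset.sdiff_subset)) hTk)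
    have h5 : c * f T₂ ≤ a := le_trans (mul_le_mul_of_nonneg_left h4 hc0.le) (happrox _)
    have hT₂nn : 0 ≤ f T₂ := hnorm ▸ hmono ∅ T₂ (Finset.empty_subset _)
    have h5' : (1 - ε) * (c * f T₂) ≤ a := by nlinarith [mul_nonneg hε0 (mul_nonneg hc0.le hT₂nn)]
    nlinarith [mul_le_mul_of_nonneg_left hfT (by positivity : (0:ℝ) ≤ c / 2 * (1 - ε))]
  rw [OPT, mul_comm, ← le_div_iff₀ (by positivity : (0:ℝ) < c / 2 * (1 - ε))]
  apply Finset.sup'_le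
  intro T hT
  rw [le_div_iff₀ (by positivity : (0:ℝ) < c / 2 * (1 - ε))]
  linarith [key T hT]
end

section
/- Under the same setup, if streams S₁, S₂ satisfy elems(S₂) ⊆ elems(S₁) and A(S₂) ≥ (1−ε)·A(S₁), then for every stream S, A(S₂ ‖ S) ≥ (c/2)(1−ε)·OPT, where OPT = max{f(T) : T ⊆ elems(S₁ ‖ S), |T| ≤ k}. -/
open Finset

/-- Unified substreams lemma (Lemma 4). -/
theorem substreams_unified {V : Type*} [DecidableEq V]
    (f : Finset V → ℝ) (k : ℕ) (hk : 1 ≤ k)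
    (hmono : ∀ S T : Finset V, S ⊆ T → f S ≤ f T)
    (hsub : ∀ A B : Finset V, f (A ∪ B) + f (A ∩ B) ≤ f A + f B)
    (hnorm : f ∅ = 0)
    (A : List V → ℝ) (c : ℝ) (hc0 : 0 < c) (hc1 : c < 1)
    (happrox : ∀ S : List V, c * OPT f k S.toFinset ≤ A S)
    (hsuffix : ∀ S S' : List V, A S ≤ A (S ++ S'))
    (ε : ℝ) (hε0 : 0 ≤ ε) (hε1 : ε < 1)
    (S₁ S₂ : List V)
    (hsubset : S₂.toFinset ⊆ S₁.toFinset)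
    (h : (1 - ε) * A S₁ ≤ A S₂) :
    ∀ S : List V,
      (c / 2) * (1 - ε) * OPT f k (S₁ ++ S).toFinset ≤ A (S₂ ++ S) := by

  intro S
  have hle : ∀ (E T : Finset V), T ⊆ E → T.card ≤ k → f T ≤ OPT f k E := by
    intro E T h1 h2
    exact Finset.le_sup' f (by simp [Finset.mem_filter, Finset.mem_powerset, h1, h2])
  have hOPTnn : ∀ E : Finset V, 0 ≤ OPT f k E := by
    intro E
    have := hle E ∅ (Finset.empty_subset E) (by simp)
    simpa [hnorm] using this
  obtain ⟨O, hO, hOeq⟩ := Finset.exists_mem_eq_sup'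
    (⟨∅, Finset.mem_filter.mpr ⟨Finset.mem_powerset.mpr (Finset.empty_subset _), by simp⟩⟩ :
      ((S₁ ++ S).toFinset.powerset.filter (fun T => T.card ≤ k)).Nonempty) f
  simp only [Finset.mem_filter, Finset.mem_powerset] at hO
  obtain ⟨hOsub, hOcard⟩ := hO
  set O₁ := O ∩ S₁.toFinset with hO₁
  set O₂ := O \ S₁.toFinset with hO₂
  have hunion : O₁ ∪ O₂ = O := by
    ext x; simp only [hO₁, hO₂, Finset.mem_union, Finset.mem_inter, Finset.mem_sdiff]; tauto
  have hinter : O₁ ∩ O₂ = ∅ := by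
    ext x; simp only [hO₁, hO₂, Finset.mem_inter, Finset.mem_sdiff, Finset.notMem_empty,
      iff_false]; tauto
  have hsplit : f O ≤ f O₁ + f O₂ := by
    have := hsub O₁ O₂
    rw [hunion, hinter, hnorm] at this
    linarith
  have hO₂S : O₂ ⊆ (S₂ ++ S).toFinset := by
    intro x hx
    simp only [hO₂, Finset.mem_sdiff] at hx
    have := hOsub hx.1
    simp only [List.toFinset_append, Finset.mem_union] at this ⊢
    tauto
  have h1 : f O₁ ≤ OPT f k S₁.toFinset :=
    hle _ _ Finset.inter_subset_right
      (le_trans (Finset.card_le_card Finset.inter_subset_left) hOcard)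
  have h2 : f O₂ ≤ OPT f k (S₂ ++ S).toFinset :=
    hle _ _ hO₂S (le_trans (Finset.card_le_card (Finset.sdiff_subset)) hOcard)
  have key : OPT f k (S₁ ++ S).toFinset ≤ OPT f k S₁.toFinset + OPT f k (S₂ ++ S).toFinset := by
    have hOeq' : OPT f k (S₁ ++ S).toFinset = f O := hOeq
    rw [hOeq']; linarith
  have hA1 : c * OPT f k S₁.toFinset ≤ A S₁ := happrox S₁
  have hA2 : c * OPT f k (S₂ ++ S).toFinset ≤ A (S₂ ++ S) := happrox (S₂ ++ S)
  have hAs : A S₂ ≤ A (S₂ ++ S) := hsuffix S₂ S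
  have hOPT1nn := hOPTnn S₁.toFinset
  have hOPT2nn := hOPTnn (S₂ ++ S).toFinset
  have hne : (0:ℝ) ≤ 1 - ε := by linarith
  have e1 : (1 - ε) * (c * OPT f k S₁.toFinset) ≤ (1 - ε) * A S₁ :=
    mul_le_mul_of_nonneg_left hA1 hne
  have e2 : (1 - ε) * (c * OPT f k (S₂ ++ S).toFinset) ≤ c * OPT f k (S₂ ++ S).toFinset := by
    nlinarith [mul_nonneg hc0.le hOPT2nn]
  have e3 : c * (1 - ε) * OPT f k (S₁ ++ S).toFinset ≤
      (1 - ε) * (c * OPT f k S₁.toFinset) + (1 - ε) * (c * OPT f k (S₂ ++ S).toFinset) := by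
    nlinarith [mul_le_mul_of_nonneg_left key (mul_nonneg hne hc0.le)]
  rw [show (c / 2) * (1 - ε) * OPT f k (S₁ ++ S).toFinset
      = c * (1 - ε) * OPT f k (S₁ ++ S).toFinset / 2 by ring,
    div_le_iff₀ (by norm_num : (0:ℝ) < 2)]
  linarith
end

section
/- Let f be monotone submodular with f(∅)=0 on a finite ground set, and let O₁₂, O₂₃, O₃, O₁₂₃ be optimal size-≤k solutions over element sets E₁∪E₂, E₂∪E₃, E₃, and E₁∪E₂∪E₃ respectively. Then f(O₁₂) + f(O₂₃) ≥ f(O₁₂) + f(O₃) ≥ f(O₁₂₃ ∩ (E₁∪E₂)) + f(O₁₂₃ ∩ E₃) ≥ f(O₁₂₃). -/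
open Finset

/-- The chain of inequalities at the heart of the smooth-histogram argument. -/
theorem smooth_histogram_chain {V : Type*} [DecidableEq V]
    (f : Finset V → ℝ) (k : ℕ) (hk : 1 ≤ k)
    (hmono : ∀ S T : Finset V, S ⊆ T → f S ≤ f T)
    (hsub : ∀ A B : Finset V, f (A ∪ B) + f (A ∩ B) ≤ f A + f B)
    (hnorm : f ∅ = 0)
    (E₁ E₂ E₃ : Finset V)
    (O₁₂ O₂₃ O₃ O₁₂₃ : Finset V)
    (hO₁₂_sub : O₁₂ ⊆ E₁ ∪ E₂) (hO₁₂_card : O₁₂.card ≤ k)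
    (hO₁₂_opt : ∀ T : Finset V, T ⊆ E₁ ∪ E₂ → T.card ≤ k → f T ≤ f O₁₂)
    (hO₂₃_sub : O₂₃ ⊆ E₂ ∪ E₃) (hO₂₃_card : O₂₃.card ≤ k)
    (hO₂₃_opt : ∀ T : Finset V, T ⊆ E₂ ∪ E₃ → T.card ≤ k → f T ≤ f O₂₃)
    (hO₃_sub : O₃ ⊆ E₃) (hO₃_card : O₃.card ≤ k)
    (hO₃_opt : ∀ T : Finset V, T ⊆ E₃ → T.card ≤ k → f T ≤ f O₃)
    (hO₁₂₃_sub : O₁₂₃ ⊆ E₁ ∪ E₂ ∪ E₃) (hO₁₂₃_card : O₁₂₃.card ≤ k)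
    (hO₁₂₃_opt : ∀ T : Finset V, T ⊆ E₁ ∪ E₂ ∪ E₃ → T.card ≤ k → f T ≤ f O₁₂₃) :
    f O₁₂ + f O₃ ≤ f O₁₂ + f O₂₃ ∧
    f (O₁₂₃ ∩ (E₁ ∪ E₂)) + f (O₁₂₃ ∩ E₃) ≤ f O₁₂ + f O₃ ∧
    f O₁₂₃ ≤ f (O₁₂₃ ∩ (E₁ ∪ E₂)) + f (O₁₂₃ ∩ E₃) := by
  refine ⟨?_, ?_, ?_⟩
  · have : f O₃ ≤ f O₂₃ :=
      hO₂₃_opt O₃ (hO₃_sub.trans subset_union_right) hO₃_card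
    linarith
  · have h1 : f (O₁₂₃ ∩ (E₁ ∪ E₂)) ≤ f O₁₂ :=
      hO₁₂_opt _ inter_subset_right
        (le_trans (card_le_card inter_subset_left) hO₁₂₃_card)
    have h2 : f (O₁₂₃ ∩ E₃) ≤ f O₃ :=
      hO₃_opt _ inter_subset_right
        (le_trans (card_le_card inter_subset_left) hO₁₂₃_card)
    linarith
  · have hun : O₁₂₃ ∩ (E₁ ∪ E₂) ∪ O₁₂₃ ∩ E₃ = O₁₂₃ := by
      rw [← inter_union_distrib_left]
      exact inter_eq_left.mpr hO₁₂₃_sub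
    have h0 : (0 : ℝ) ≤ f (O₁₂₃ ∩ (E₁ ∪ E₂) ∩ (O₁₂₃ ∩ E₃)) := by
      rw [← hnorm]; exact hmono _ _ (empty_subset _)
    have := hsub (O₁₂₃ ∩ (E₁ ∪ E₂)) (O₁₂₃ ∩ E₃)
    rw [hun] at this
    linarith
end
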